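/- arXiv:1702.04988 — 2 statements merged into one kernel-verified Lean document; each statement's English description precedes it below -/
import Mathlib

section
/- If unit vectors τᵏ, τ^{k+1} ∈ ℝ² and nonzero vectors vᵏ, v^{k+1} with τ^{k+1} = v^{k+1}/|v^{k+1}| satisfy the velocity-form constraint τᵏ · (v^{k+1} − vᵏ) = 0 and τᵏ = vᵏ/|vᵏ|, then, writing μᵏ = |vᵏ| and μ^{k+1} = |v^{k+1}|, we have μ^{k+1} = μᵏ / (1 − ½|τ^{k+1} − τᵏ|²) whenever |τ^{k+1} − τᵏ|² < 2; hence μ^{k+1} ≥ μᵏ with equality iff τ^{k+1} = τᵏ. -/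
noncomputable section

/-- For nonzero vectors `vᵏ, v^{k+1}` with unit tangents
`τᵏ = vᵏ/|vᵏ|`, `τ^{k+1} = v^{k+1}/|v^{k+1}|` satisfying the velocity-form constraint
`τᵏ · (v^{k+1} − vᵏ) = 0`, if `|τ^{k+1} − τᵏ|² < 2` then
`μ^{k+1} = μᵏ/(1 − ½|τ^{k+1} − τᵏ|²)`; hence `μ^{k+1} ≥ μᵏ` with equality iff
`τ^{k+1} = τᵏ`. -/
theorem discrete_velocity_constraint_growth
    (vk vk1 : EuclideanSpace ℝ (Fin 2))
    (hvk : vk ≠ 0) (hvk1 : vk1 ≠ 0)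
    (μk μk1 : ℝ) (hμk : μk = ‖vk‖) (hμk1 : μk1 = ‖vk1‖)
    (τk τk1 : EuclideanSpace ℝ (Fin 2))
    (hτk : τk = μk⁻¹ • vk) (hτk1 : τk1 = μk1⁻¹ • vk1)
    (hconstraint : (inner ℝ τk (vk1 - vk) : ℝ) = 0)
    (hclose : ‖τk1 - τk‖ ^ 2 < 2) :
    μk1 = μk / (1 - (1 / 2) * ‖τk1 - τk‖ ^ 2) ∧
    μk ≤ μk1 ∧
    (μk1 = μk ↔ τk1 = τk) := by
  have hμkpos : 0 < μk := hμk ▸ norm_pos_iff.mpr hvk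
  have hμk1pos : 0 < μk1 := hμk1 ▸ norm_pos_iff.mpr hvk1
  have hτknorm : ‖τk‖ = 1 := by
    rw [hτk, norm_smul, Real.norm_eq_abs, abs_of_pos (inv_pos.mpr hμkpos), ← hμk,
      inv_mul_cancel₀ hμkpos.ne']
  have hτk1norm : ‖τk1‖ = 1 := by
    rw [hτk1, norm_smul, Real.norm_eq_abs, abs_of_pos (inv_pos.mpr hμk1pos), ← hμk1,
      inv_mul_cancel₀ hμk1pos.ne']
  -- inner τk vk = μk
  have hinnkk : (inner ℝ τk vk : ℝ) = μk := by
    rw [hτk, inner_smul_left, real_inner_self_eq_norm_sq, ← hμk]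
    field_simp
    simp [hμkpos.ne']
  have hinnk1 : (inner ℝ τk vk1 : ℝ) = μk := by
    rw [inner_sub_right] at hconstraint
    linarith [hconstraint, hinnkk]
  -- inner τk1 τk = μk / μk1
  have hinntt : (inner ℝ τk1 τk : ℝ) = μk1⁻¹ * μk := by
    rw [hτk1, inner_smul_left, real_inner_comm, hinnk1]
    simp
  have hns : ‖τk1 - τk‖ ^ 2 = 2 - 2 * (μk1⁻¹ * μk) := by
    rw [← real_inner_self_eq_norm_sq, inner_sub_sub_self, real_inner_self_eq_norm_sq,
      real_inner_self_eq_norm_sq, hτknorm, hτk1norm]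
    have h' : (inner ℝ τk τk1 : ℝ) = μk1⁻¹ * μk := (real_inner_comm τk1 τk) ▸ hinntt
    rw [h']; linarith [hinntt]
  have hd : 1 - (1 / 2) * ‖τk1 - τk‖ ^ 2 = μk1⁻¹ * μk := by rw [hns]; ring
  have h1 : μk1 = μk / (1 - (1 / 2) * ‖τk1 - τk‖ ^ 2) := by
    rw [hd]; field_simp
  have hle : μk ≤ μk1 := by
    -- from Cauchy–Schwarz: inner τk1 τk ≤ 1
    have hcs : (inner ℝ τk1 τk : ℝ) ≤ 1 := by
      calc (inner ℝ τk1 τk : ℝ) ≤ ‖τk1‖ * ‖τk‖ := real_inner_le_norm _ _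
        _ = 1 := by rw [hτknorm, hτk1norm]; ring
    rw [hinntt] at hcs
    calc μk = μk1 * (μk1⁻¹ * μk) := by field_simp
      _ ≤ μk1 * 1 := by nlinarith
      _ = μk1 := by ring
  refine ⟨h1, hle, ?_, ?_⟩
  · intro heq
    have : ‖τk1 - τk‖ ^ 2 = 0 := by
      rw [hns, ← heq]; field_simp; ring
    have := pow_eq_zero_iff (n := 2) (by norm_num) |>.mp this
    rw [norm_eq_zero, sub_eq_zero] at this
    exact this
  · intro heq
    rw [heq] at hns
    simp at hns
    have : μk1⁻¹ * μk = 1 := by linarith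
    field_simp at this
    linarith
end
end

section
/- In the semi-discrete finite element scheme, testing the constraint equation ∫₀¹ τ_h · x_{h,u,t} q_h du = 0 with the normalised characteristic function of each element implies that τ_h · x_{h,u,t} = 0 on each element and hence d/dt |x_{h,u}| = 0 identically, so the discrete length element is conserved exactly in time. -/
noncomputable section

/-- In the semi-discrete scheme, if the constraint
`∫₀¹ τ_h · x_{h,u,t} q_h du = 0` holds for all piecewise constants `q_h`, then
(testing with the normalised characteristic function of each element)
`τ_h · x_{h,u,t} = 0` on each element and hence `d/dt |x_{h,u}| = 0`, i.e.
the discrete length element is conserved exactly.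
Here `v j t` denotes the (elementwise constant) value of `x_{h,u}` on element `j`
at time `t`, `h j > 0` the element length, and `τ j t = v j t / |v j t|`. -/
theorem discrete_constraint_conserves_length_element
    (N : ℕ) (h : Fin N → ℝ) (hpos : ∀ j, 0 < h j)
    (v : Fin N → ℝ → EuclideanSpace ℝ (Fin 2))
    (hdiff : ∀ j, Differentiable ℝ (v j))
    (hreg : ∀ j t, v j t ≠ 0)
    (τ : Fin N → ℝ → EuclideanSpace ℝ (Fin 2))
    (hτ : ∀ j t, τ j t = ‖v j t‖⁻¹ • v j t)
    -- the constraint `∫₀¹ τ_h · x_{h,u,t} q_h du = 0` for every piecewise constant `q_h`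
    (hconstraint : ∀ t, ∀ q : Fin N → ℝ,
      ∑ j, h j * q j * (inner ℝ (τ j t) (deriv (v j) t) : ℝ) = 0) :
    ∀ t, ∀ j, (inner ℝ (τ j t) (deriv (v j) t) : ℝ) = 0 ∧
      deriv (fun s => ‖v j s‖) t = 0 := by
  intro t j
  -- test with the indicator of element j
  have hkey : (inner ℝ (τ j t) (deriv (v j) t) : ℝ) = 0 := by
    have := hconstraint t (fun k => if k = j then 1 else 0)
    rw [Finset.sum_eq_single j] at this
    · simp only [if_true, mul_one] at this
      exact (mul_eq_zero.1 this).resolve_left (hpos j).ne'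
    · intro k _ hk; simp [hk]
    · intro hj; exact absurd (Finset.mem_univ j) hj
  refine ⟨hkey, ?_⟩
  -- inner (v j t) (deriv (v j) t) = 0
  have hvv : (inner ℝ (v j t) (deriv (v j) t) : ℝ) = 0 := by
    rw [hτ j t, real_inner_smul_left] at hkey
    have hne : ‖v j t‖⁻¹ ≠ 0 := inv_ne_zero (norm_ne_zero_iff.2 (hreg j t))
    exact (mul_eq_zero.1 hkey).resolve_left hne
  -- derivative of ‖v j s‖² is 2 * inner = 0
  have hsq : HasDerivAt (fun s => ‖v j s‖ ^ 2)
      (2 * (inner ℝ (v j t) (deriv (v j) t) : ℝ)) t :=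
    ((hdiff j t).hasDerivAt).norm_sq
  have hne2 : ‖v j t‖ ^ 2 ≠ 0 := pow_ne_zero 2 (norm_ne_zero_iff.2 (hreg j t))
  have hsqrt : HasDerivAt (fun s => Real.sqrt (‖v j s‖ ^ 2))
      ((2 * (inner ℝ (v j t) (deriv (v j) t) : ℝ)) / (2 * Real.sqrt (‖v j t‖ ^ 2))) t :=
    hsq.sqrt hne2
  have heq : (fun s => Real.sqrt (‖v j s‖ ^ 2)) = fun s => ‖v j s‖ := by
    funext s; rw [Real.sqrt_sq (norm_nonneg _)]
  rw [heq] at hsqrt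
  have := hsqrt.deriv
  rw [this, hvv]
  ring

end
end
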